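/- For any p, q ∈ ℕ, a fixed cost matrix M ∈ ℝ^{p×q} and parameters ε > 0, γ > 0, the function G(P, θ₁, θ₂) = ⟨P, M⟩ + ε·Σ_{i,j} P_{ij}(log P_{ij} − 1) + γ·kl(P𝟙, θ₁) + γ·kl(Pᵀ𝟙, θ₂) is jointly convex in (P, θ₁, θ₂) on the domain of matrices P ∈ (0,∞)^{p×q} and vectors θ₁ ∈ (0,∞)^p, θ₂ ∈ (0,∞)^q. -/

import Mathlib

open scoped BigOperators

/-- Generalized Kullback–Leibler divergence on positive vectors:
`kl (x, y) = ∑ i, x i * log (x i / y i) + y i - x i`. -/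
noncomputable def genKL {p : ℕ} (x y : Fin p → ℝ) : ℝ :=
  ∑ i, (x i * Real.log (x i / y i) + y i - x i)

/-- Unbalanced entropic OT functional:
`G (P, θ₁, θ₂) = ⟨P, M⟩ + ε ∑ P_{ij} (log P_{ij} - 1) + γ kl(P𝟙, θ₁) + γ kl(Pᵀ𝟙, θ₂)`. -/
noncomputable def unbalancedOT {p q : ℕ} (M : Matrix (Fin p) (Fin q) ℝ) (ε γ : ℝ)
    (P : Matrix (Fin p) (Fin q) ℝ) (θ₁ : Fin p → ℝ) (θ₂ : Fin q → ℝ) : ℝ :=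
  (∑ i, ∑ j, P i j * M i j)
    + ε * ∑ i, ∑ j, P i j * (Real.log (P i j) - 1)
    + γ * genKL (fun i => ∑ j, P i j) θ₁
    + γ * genKL (fun j => ∑ i, P i j) θ₂

/-!
Every summand of `G` is jointly convex. The cost term is linear and `x ↦ x (log x - 1)` is convex
on `[0, ∞)`. The generalized Kullback–Leibler summand `x log (x / y) + y - x` equals
`y φ (x / y)` with `φ u = u log u + 1 - u`, i.e. it is the perspective of the convex function `φ`,
and the perspective of a convex function is jointly convex. The row and column sums `P𝟙`, `Pᵀ𝟙`
depend linearly on `P`, so composing with linear maps and adding with the weights `ε, γ ≥ 0`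
keeps everything convex.
-/

open Real Set InformationTheory

lemma inv_smul_add_smul_eq {𝕜 E : Type*} [Field 𝕜] [AddCommGroup E] [Module 𝕜 E] {x₁ x₂ : E}
    {t₁ t₂ a b : 𝕜} (ht₁ : t₁ ≠ 0) (ht₂ : t₂ ≠ 0) (ht : a * t₁ + b * t₂ ≠ 0) :
    (a * t₁ + b * t₂)⁻¹ • (a • x₁ + b • x₂) =
      (a * t₁ / (a * t₁ + b * t₂)) • t₁⁻¹ • x₁ + (b * t₂ / (a * t₁ + b * t₂)) • t₂⁻¹ • x₂ := by
  simp only [smul_add, smul_smul]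
  congr 2 <;> field_simp

theorem ConvexOn.perspective {𝕜 E : Type*} [Field 𝕜] [LinearOrder 𝕜] [IsStrictOrderedRing 𝕜]
    [AddCommGroup E] [Module 𝕜 E] {s : Set E} {f : E → 𝕜} (hf : ConvexOn 𝕜 s f) :
    ConvexOn 𝕜 {z : E × 𝕜 | 0 < z.2 ∧ z.2⁻¹ • z.1 ∈ s} fun z => z.2 * f (z.2⁻¹ • z.1) := by
  have key : ∀ ⦃x₁ : E⦄ ⦃t₁ : 𝕜⦄, 0 < t₁ ∧ t₁⁻¹ • x₁ ∈ s → ∀ ⦃x₂ : E⦄ ⦃t₂ : 𝕜⦄,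
      0 < t₂ ∧ t₂⁻¹ • x₂ ∈ s → ∀ ⦃a b : 𝕜⦄, 0 ≤ a → 0 ≤ b → a + b = 1 →
      0 < a * t₁ + b * t₂ ∧ (a * t₁ + b * t₂)⁻¹ • (a • x₁ + b • x₂) ∈ s ∧
      (a * t₁ + b * t₂) * f ((a * t₁ + b * t₂)⁻¹ • (a • x₁ + b • x₂)) ≤
        a * (t₁ * f (t₁⁻¹ • x₁)) + b * (t₂ * f (t₂⁻¹ • x₂)) := by
    rintro x₁ t₁ ⟨ht₁, hx₁⟩ x₂ t₂ ⟨ht₂, hx₂⟩ a b ha hb hab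
    have ht : 0 < a * t₁ + b * t₂ := convex_Ioi 0 ht₁ ht₂ ha hb hab
    -- the rescaled combination is the convex combination of `t₁⁻¹ • x₁` and `t₂⁻¹ • x₂`
    -- with weights `a t₁ / t` and `b t₂ / t`
    have hw : a * t₁ / (a * t₁ + b * t₂) + b * t₂ / (a * t₁ + b * t₂) = 1 := by
      field_simp
    rw [inv_smul_add_smul_eq ht₁.ne' ht₂.ne' ht.ne']
    refine ⟨ht, hf.1 hx₁ hx₂ (by positivity) (by positivity) hw, ?_⟩
    calc _ ≤ (a * t₁ + b * t₂) * (a * t₁ / (a * t₁ + b * t₂) * f (t₁⁻¹ • x₁)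
            + b * t₂ / (a * t₁ + b * t₂) * f (t₂⁻¹ • x₂)) :=
          mul_le_mul_of_nonneg_left (hf.2 hx₁ hx₂ (by positivity) (by positivity) hw) ht.le
      _ = _ := by field_simp
  refine ⟨?_, ?_⟩
  · rintro ⟨x₁, t₁⟩ h₁ ⟨x₂, t₂⟩ h₂ a b ha hb hab
    exact ⟨(key h₁ h₂ ha hb hab).1, (key h₁ h₂ ha hb hab).2.1⟩
  · rintro ⟨x₁, t₁⟩ h₁ ⟨x₂, t₂⟩ h₂ a b ha hb hab
    exact (key h₁ h₂ ha hb hab).2.2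

section Sums

variable {𝕜 E F β ι : Type*} [Semiring 𝕜] [PartialOrder 𝕜] [AddCommMonoid E] [AddCommMonoid F]
  [AddCommMonoid β] [PartialOrder β] [IsOrderedAddMonoid β] [Module 𝕜 E] [Module 𝕜 F]
  [Module 𝕜 β]

lemma ConvexOn.finset_sum {s : Set E} (hs : Convex 𝕜 s) (t : Finset ι) {f : ι → E → β}
    (hf : ∀ i ∈ t, ConvexOn 𝕜 s (f i)) : ConvexOn 𝕜 s fun x => ∑ i ∈ t, f i x := by
  classical
  induction t using Finset.induction_on with
  | empty => simpa only [Finset.sum_empty] using convexOn_const (0 : β) hs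
  | insert i t hi ih =>
    simp only [Finset.sum_insert hi]
    exact (hf i (Finset.mem_insert_self i t)).add
      (ih fun j hj => hf j (Finset.mem_insert_of_mem hj))

lemma ConvexOn.sum_comp_linearMap [Fintype ι] {s : Set F} {f : F → β} (hf : ConvexOn 𝕜 s f)
    (g : ι → E →ₗ[𝕜] F) : ConvexOn 𝕜 {x | ∀ i, g i x ∈ s} fun x => ∑ i, f (g i x) := by
  have hconv : Convex 𝕜 {x | ∀ i, g i x ∈ s} := by
    rw [ofPred_forall]
    exact convex_iInter fun i => hf.1.linear_preimage (g i)
  exact .finset_sum hconv _ fun i _ => (hf.comp_linearMap (g i)).subset (fun x hx => hx i) hconv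

end Sums

lemma convexOn_mul_log_div_add_sub :
    ConvexOn ℝ (Ici 0 ×ˢ Ioi 0) fun z : ℝ × ℝ => z.1 * log (z.1 / z.2) + z.2 - z.1 := by
  have hdom : {z : ℝ × ℝ | 0 < z.2 ∧ z.2⁻¹ • z.1 ∈ Ici 0} = Ici 0 ×ˢ Ioi 0 := by
    ext ⟨x, t⟩
    simp only [mem_ofPred_eq, mem_prod, mem_Ici, mem_Ioi, smul_eq_mul]
    constructor
    · rintro ⟨ht, hx⟩
      exact ⟨(mul_nonneg_iff_of_pos_left (inv_pos.2 ht)).1 hx, ht⟩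
    · rintro ⟨hx, ht⟩
      exact ⟨ht, by positivity⟩
  refine hdom ▸ convexOn_klFun.perspective.congr fun z hz => ?_
  have ht : z.2 ≠ 0 := hz.1.ne'
  simp only [klFun, smul_eq_mul, ← div_eq_inv_mul]
  field_simp

lemma convexOn_genKL {p : ℕ} :
    ConvexOn ℝ {z : (Fin p → ℝ) × (Fin p → ℝ) | ∀ i, 0 ≤ z.1 i ∧ 0 < z.2 i}
      fun z => genKL z.1 z.2 :=
  convexOn_mul_log_div_add_sub.sum_comp_linearMap fun i =>
    (LinearMap.proj i).prodMap (LinearMap.proj i)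

lemma convexOn_mul_log_sub_one : ConvexOn ℝ (Ici 0) fun x : ℝ => x * (log x - 1) :=
  (convexOn_mul_log.sub (concaveOn_id (convex_Ici 0))).congr fun x _ => by
    simp only [Pi.sub_apply, id]; ring

lemma convexOn_sum_mul_log_sub_one {m n : Type*} [Fintype m] [Fintype n] :
    ConvexOn ℝ {P : Matrix m n ℝ | ∀ i j, 0 ≤ P i j}
      fun P => ∑ i, ∑ j, P i j * (log (P i j) - 1) := by
  simpa only [Fintype.sum_prod_type, Prod.forall, Matrix.entryLinearMap_apply, mem_Ici] using
    convexOn_mul_log_sub_one.sum_comp_linearMap fun ij : m × n =>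
      Matrix.entryLinearMap ℝ ℝ ij.1 ij.2

def Matrix.rowSums {R m n : Type*} [Semiring R] [Fintype n] : Matrix m n R →ₗ[R] m → R where
  toFun P i := ∑ j, P i j
  map_add' P Q := by ext; simp [Finset.sum_add_distrib]
  map_smul' c P := by ext; simp [Finset.mul_sum]

lemma convex_setOf_entries_pos {m n : Type*} :
    Convex ℝ {x : Matrix m n ℝ × (m → ℝ) × (n → ℝ) |
      (∀ i j, 0 < x.1 i j) ∧ (∀ i, 0 < x.2.1 i) ∧ (∀ j, 0 < x.2.2 j)} :=
  fun _ hx _ hy _ _ ha hb hab =>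
    ⟨fun i j => convex_Ioi (0 : ℝ) (hx.1 i j) (hy.1 i j) ha hb hab,
      fun i => convex_Ioi (0 : ℝ) (hx.2.1 i) (hy.2.1 i) ha hb hab,
      fun j => convex_Ioi (0 : ℝ) (hx.2.2 j) (hy.2.2 j) ha hb hab⟩

theorem unbalancedOT_jointly_convex (p q : ℕ) (M : Matrix (Fin p) (Fin q) ℝ)
    (ε γ : ℝ) (hε : 0 < ε) (hγ : 0 < γ) :
    ConvexOn ℝ
      {x : Matrix (Fin p) (Fin q) ℝ × (Fin p → ℝ) × (Fin q → ℝ) |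
        (∀ i j, 0 < x.1 i j) ∧ (∀ i, 0 < x.2.1 i) ∧ (∀ j, 0 < x.2.2 j)}
      (fun x => unbalancedOT M ε γ x.1 x.2.1 x.2.2) := by
  have hS := convex_setOf_entries_pos (m := Fin p) (n := Fin q)
  let plan : Matrix (Fin p) (Fin q) ℝ × (Fin p → ℝ) × (Fin q → ℝ) →ₗ[ℝ] Matrix (Fin p) (Fin q) ℝ :=
    LinearMap.fst ℝ _ _
  have hcost := ConvexOn.finset_sum hS .univ fun i _ => .finset_sum hS .univ fun j _ =>
    ((Matrix.entryLinearMap ℝ ℝ i j ∘ₗ plan).smulRight (M i j)).convexOn hS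
  have hent := (convexOn_sum_mul_log_sub_one.comp_linearMap plan).subset
    (by intro x hx i j; exact (hx.1 i j).le) hS
  have hrow := (convexOn_genKL.comp_linearMap
    ((Matrix.rowSums ∘ₗ plan).prod (LinearMap.fst ℝ _ _ ∘ₗ LinearMap.snd ℝ _ _))).subset
    (by intro x hx i; exact ⟨Finset.sum_nonneg (s := .univ) fun j _ => (hx.1 i j).le, hx.2.1 i⟩)
    hS
  have hcol := (convexOn_genKL.comp_linearMap
    ((Matrix.rowSums ∘ₗ (Matrix.transposeLinearEquiv _ _ ℝ ℝ).toLinearMap ∘ₗ plan).prod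
      (LinearMap.snd ℝ _ _ ∘ₗ LinearMap.snd ℝ _ _))).subset
    (by intro x hx j; exact ⟨Finset.sum_nonneg (s := .univ) fun i _ => (hx.1 i j).le, hx.2.2 j⟩)
    hS
  exact ((hcost.add (hent.smul hε.le)).add (hrow.smul hγ.le)).add (hcol.smul hγ.le)
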